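/- Let P be a partial quiver of type A_n. (a) For each component Y of P with b = b(Y), every root in S(Y) has height n + 2 − b, and the roots of S(Y) have pairwise distinct left endpoints and pairwise distinct right endpoints (the left and right endpoints of α_{cd} being c and d). (b) If Z is the component of P immediately to the right of a component Y, then the common height of the roots of S(Z) equals the common height of the roots of S(Y) plus the number of edges of Y. -/

import Mathlib

/-!
Common definitions: type `A_n` combinatorics of reduced words for the longest
element, partial quivers, chamber sets, Lusztig cones, the rectangle diagrams
`D(P)` and `D(j)`, the sets `S(P)`, `S(j)`, `S(x)`, and Reineke's description
of Kashiwara's operators.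
-/

noncomputable section

namespace Paper

attribute [local instance] Classical.propDecidable

/-! ### Partial quivers of type `A_n` -/

/-- Edge symbols of a partial quiver: leftward arrow, rightward arrow, undirected. -/
inductive PQSym : Type
  | L : PQSym
  | R : PQSym
  | N : PQSym
deriving DecidableEq

/-- A partial quiver of type `A_n`: symbols on the edges `2, …, n` (numbered from the
right-hand end), with the directed edges forming a nonempty interval. -/
structure PartialQuiver (n : ℕ) : Type where
  edge : ℕ → PQSym
  undirected_outside : ∀ j : ℕ, j < 2 ∨ n < j → edge j = PQSym.N
  directed_nonempty : ∃ j : ℕ, edge j ≠ PQSym.N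
  directed_interval : ∀ j j' j'' : ℕ, j ≤ j' → j' ≤ j'' →
    edge j ≠ PQSym.N → edge j'' ≠ PQSym.N → edge j' ≠ PQSym.N

/-- A quiver: a partial quiver with no undirected edge. -/
def IsQuiver (n : ℕ) (Q : PartialQuiver n) : Prop :=
  ∀ j : ℕ, 2 ≤ j → j ≤ n → Q.edge j ≠ PQSym.N

/-- `P ≤ Q` : every directed edge of `P` carries the same symbol in `Q`. -/
def PQle (n : ℕ) (P Q : PartialQuiver n) : Prop :=
  ∀ j : ℕ, P.edge j ≠ PQSym.N → Q.edge j = P.edge j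

/-- The edges `lo, lo+1, …, hi` form a component of `P` (a maximal run of equally
oriented directed edges).  Its type is `P.edge lo`, and `a(Y) = lo - 1`,
`b(Y) = hi + 1`. -/
def IsComp (n : ℕ) (P : PartialQuiver n) (lo hi : ℕ) : Prop :=
  2 ≤ lo ∧ lo ≤ hi ∧ hi ≤ n ∧ P.edge lo ≠ PQSym.N ∧
    (∀ j : ℕ, lo ≤ j → j ≤ hi → P.edge j = P.edge lo) ∧
    P.edge (lo - 1) ≠ P.edge lo ∧ P.edge (hi + 1) ≠ P.edge lo

/-- The chamber set `l(P) ⊆ [1, n+1]` of a partial quiver: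
`l₁(P) = {j : edge j is an L}`, `l₂(P) = [1, p-1]` if the rightmost directed edge is
an `R` at position `p`, `l₃(P) = [q+1, n+1]` if the leftmost directed edge is an `R`
at position `q`. -/
def lset (n : ℕ) (P : PartialQuiver n) : Finset ℕ :=
  (Finset.Icc 1 (n + 1)).filter (fun m =>
    P.edge m = PQSym.L ∨
    (∃ p ∈ Finset.Icc 2 n, P.edge p = PQSym.R ∧
      (∀ q ∈ Finset.Icc 2 n, q < p → P.edge q = PQSym.N) ∧ m < p) ∨
    (∃ q ∈ Finset.Icc 2 n, P.edge q = PQSym.R ∧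
      (∀ p' ∈ Finset.Icc 2 n, q < p' → P.edge p' = PQSym.N) ∧ q < m))

/-! ### Reduced words for the longest element, positive roots, chamber sets -/

/-- The Coxeter generator `s_i`, acting as the transposition `(i, i+1)` of `ℕ`. -/
def sRefl (i : ℕ) : Equiv.Perm ℕ := Equiv.swap i (i + 1)

/-- The product `s_{i_1} s_{i_2} ⋯ s_{i_k}` of a word. -/
def wordProd (w : List ℕ) : Equiv.Perm ℕ := (w.map sRefl).prod

/-- `w` is a reduced expression for the longest element `w₀` of `W(A_n) = S_{n+1}`:
its letters lie in `[1,n]`, it has length `n(n+1)/2`, and its product is the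
permutation `m ↦ n + 2 - m` of `[1, n+1]`. -/
def IsRedWordW0 (n : ℕ) (w : List ℕ) : Prop :=
  (∀ i ∈ w, 1 ≤ i ∧ i ≤ n) ∧ w.length = n * (n + 1) / 2 ∧
    ∀ m : ℕ, 1 ≤ m → m ≤ n + 1 → wordProd w m = n + 2 - m

/-- The letter `i_r` of `w` (positions numbered from `1`). -/
def letterAt (w : List ℕ) (r : ℕ) : ℕ := w.getD (r - 1) 0

/-- The `r`-th positive root `α^r = s_{i_1} ⋯ s_{i_{r-1}} (α_{i_r})` determined by `w`,
recorded as the pair `(c, d)` with `c < d` for `α_{cd} = α_c + ⋯ + α_{d-1}`. -/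
def rootAt (w : List ℕ) (r : ℕ) : ℕ × ℕ :=
  (min (wordProd (w.take (r - 1)) (letterAt w r))
       (wordProd (w.take (r - 1)) (letterAt w r + 1)),
   max (wordProd (w.take (r - 1)) (letterAt w r))
       (wordProd (w.take (r - 1)) (letterAt w r + 1)))

/-- The chamber sets of the chamber diagram `CD(w)`: bounded chambers correspond to
minimal pairs `r < r'` (equal letters with no equal letter in between); the chamber
set of such a chamber is the set of strings passing below it, namely
`{(s_{i_1} ⋯ s_{i_r})(m) : i_r < m ≤ n+1}`. -/
def chamberSets (n : ℕ) (w : List ℕ) : Set (Finset ℕ) :=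
  { S | ∃ r r' : ℕ, 1 ≤ r ∧ r < r' ∧ r' ≤ w.length ∧ letterAt w r' = letterAt w r ∧
      (∀ p : ℕ, r < p → p < r' → letterAt w p ≠ letterAt w r) ∧
      S = (Finset.Icc (letterAt w r + 1) (n + 1)).image (wordProd (w.take r)) }

/-! ### The multisets `M(P)`, `M(j)` and the spanning vectors `v_P`, `v_j` -/

/-- The number `m_{cd}` of components `Y` of `P` with `α_{cd} ∈ M(Y)`, where
`M(Y) = {α_{cd} : 1 ≤ c ≤ a(Y) ≤ b(Y) ≤ d ≤ n+1}`. -/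
def compCount (n : ℕ) (P : PartialQuiver n) (c d : ℕ) : ℕ :=
  ((Finset.Icc 2 n ×ˢ Finset.Icc 2 n).filter (fun lh =>
    IsComp n P lh.1 lh.2 ∧ 1 ≤ c ∧ c ≤ lh.1 - 1 ∧ lh.2 + 1 ≤ d ∧ d ≤ n + 1)).card

/-- The multiplicity `⌈m_{cd}/2⌉` of `α_{cd}` in the multiset `M(P)`. -/
def multMP (n : ℕ) (P : PartialQuiver n) (c d : ℕ) : ℕ := (compCount n P c d + 1) / 2

/-- The spanning vector `v_P(w)`: its `r`-th entry is the multiplicity of `α^r` in `M(P)`. -/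
def vP (n : ℕ) (w : List ℕ) (P : PartialQuiver n) (r : ℕ) : ℕ :=
  if 1 ≤ r ∧ r ≤ w.length then multMP n P (rootAt w r).1 (rootAt w r).2 else 0

/-- The spanning vector `v_j(w)`: its `r`-th entry is the multiplicity of `α^r` in
`M(j) = {α_{cd} : c ≤ j < j+1 ≤ d}`. -/
def vj (n : ℕ) (w : List ℕ) (j r : ℕ) : ℕ :=
  if 1 ≤ r ∧ r ≤ w.length ∧ (rootAt w r).1 ≤ j ∧ j + 1 ≤ (rootAt w r).2 then 1 else 0

/-- The Lusztig cone `C_w ⊆ ℕ^k` (entries indexed by positions `1, …, k`). -/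
def LusztigCone (n : ℕ) (w : List ℕ) : Set (ℕ → ℕ) :=
  { a | (∀ r : ℕ, r = 0 ∨ w.length < r → a r = 0) ∧
      ∀ s s' : ℕ, 1 ≤ s → s < s' → s' ≤ w.length → letterAt w s' = letterAt w s →
        (∀ p : ℕ, s < p → p < s' → letterAt w p ≠ letterAt w s) →
        a s + a s' ≤ ∑ p ∈ (Finset.Ioo s s').filter
          (fun p => letterAt w p = letterAt w s + 1 ∨ letterAt w s = letterAt w p + 1), a p }

/-- A single commutation move: interchange adjacent letters `p, q` with `|p - q| > 1`. -/
def CommMove (w w' : List ℕ) : Prop :=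
  ∃ (u v : List ℕ) (p q : ℕ), (p + 1 < q ∨ q + 1 < p) ∧
    w = u ++ p :: q :: v ∧ w' = u ++ q :: p :: v

/-! ### Compatibility of a reduced word with a quiver -/

def flipSym : PQSym → PQSym
  | PQSym.L => PQSym.R
  | PQSym.R => PQSym.L
  | PQSym.N => PQSym.N

/-- Reverse all arrows incident to the vertex `v` (these are the edges `v` and `v+1`). -/
def reverseAt (Q : ℕ → PQSym) (v : ℕ) : ℕ → PQSym :=
  fun j => if j = v ∨ j = v + 1 then flipSym (Q j) else Q j

/-- The vertex `v ∈ [1,n]` is a sink (all incident arrows point into `v`). -/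
def IsSinkF (n : ℕ) (Q : ℕ → PQSym) (v : ℕ) : Prop :=
  1 ≤ v ∧ v ≤ n ∧ (2 ≤ v → Q v = PQSym.L) ∧ (v + 1 ≤ n → Q (v + 1) = PQSym.R)

def CompatibleAux (n : ℕ) : List ℕ → (ℕ → PQSym) → Prop
  | [], _ => True
  | i :: rest, Q => IsSinkF n Q i ∧ CompatibleAux n rest (reverseAt Q i)

/-- `w` is compatible with the quiver `Q`: `i_1` is a sink of `Q` and the rest of `w`
is compatible with the quiver obtained by reversing all arrows incident to `i_1`. -/
def Compatible (n : ℕ) (w : List ℕ) (Q : PartialQuiver n) : Prop :=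
  CompatibleAux n w Q.edge

/-! ### The piecewise-linear maps `T₂`, `T₃` -/

def T2 (x : ℕ × ℕ) : ℕ × ℕ := (x.2, x.1)

def T3 (x : ℤ × ℤ × ℤ) : ℤ × ℤ × ℤ :=
  (max x.2.2 (x.2.1 - x.1), x.1 + x.2.2, min x.1 (x.2.1 - x.2.2))

/-! ### The diagram `D(P)` -/

/-- The point `T + u·(-1,-1) + v·(1,-1)` of a rectangle with top corner `T`. -/
def rectPt (T : ℤ × ℤ) (u v : ℕ) : ℤ × ℤ :=
  (T.1 - (u : ℤ) + (v : ℤ), T.2 - (u : ℤ) - (v : ℤ))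

/-- `Tc` assigns to each component `(lo,hi)` of `P` the top corner of its rectangle
`ρ(Y)` (which has `a = lo - 1` rows in direction `(-1,-1)` and `n + 2 - b = n + 1 - hi`
columns in direction `(1,-1)`), so that whenever a component of type `L` is immediately
followed (on the right, i.e. at lower edge numbers) by one of type `R` their leftmost
corners coincide, and whenever one of type `R` is immediately followed by one of type
`L` their rightmost corners coincide. -/
def IsRealization (n : ℕ) (P : PartialQuiver n) (Tc : ℕ × ℕ → ℤ × ℤ) : Prop :=
  ∀ lo hi lo' hi' : ℕ, IsComp n P lo hi → IsComp n P lo' hi' → hi' + 1 = lo →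
    (P.edge lo = PQSym.L →
      rectPt (Tc (lo, hi)) (lo - 2) 0 = rectPt (Tc (lo', hi')) (lo' - 2) 0) ∧
    (P.edge lo = PQSym.R →
      rectPt (Tc (lo, hi)) 0 (n - hi) = rectPt (Tc (lo', hi')) 0 (n - hi'))

/-- `x` belongs to the rectangle of the component `(lo,hi)`. -/
def InRect (n : ℕ) (Tc : ℕ × ℕ → ℤ × ℤ) (lo hi : ℕ) (x : ℤ × ℤ) : Prop :=
  ∃ u v : ℕ, u ≤ lo - 2 ∧ v ≤ n - hi ∧ x = rectPt (Tc (lo, hi)) u v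

/-- The set of points of the diagram `D(P)`. -/
def pointsD (n : ℕ) (P : PartialQuiver n) (Tc : ℕ × ℕ → ℤ × ℤ) : Finset (ℤ × ℤ) :=
  ((Finset.Icc 2 n ×ˢ Finset.Icc 2 n).filter (fun lh => IsComp n P lh.1 lh.2)).biUnion
    (fun lh => (Finset.range (lh.1 - 1) ×ˢ Finset.range (n + 1 - lh.2)).image
      (fun uv => rectPt (Tc lh) uv.1 uv.2))

/-- The label of the top corner of the rectangle of `(lo,hi)`: `1` for type `L`,
`b - a = hi - lo + 2` for type `R`. -/
def baseOf (n : ℕ) (P : PartialQuiver n) (lo hi : ℕ) : ℕ :=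
  if P.edge lo = PQSym.L then 1 else hi - lo + 2

/-- The point `x` of `D(P)` carries the label `m`. -/
def HasLabel (n : ℕ) (P : PartialQuiver n) (Tc : ℕ × ℕ → ℤ × ℤ) (x : ℤ × ℤ) (m : ℕ) : Prop :=
  ∃ lo hi u v : ℕ, IsComp n P lo hi ∧ u ≤ lo - 2 ∧ v ≤ n - hi ∧
    x = rectPt (Tc (lo, hi)) u v ∧ m = baseOf n P lo hi + u + v

/-- The label of a point of `D(P)` (labels from different rectangles agree). -/
def labelD (n : ℕ) (P : PartialQuiver n) (Tc : ℕ × ℕ → ℤ × ℤ) (x : ℤ × ℤ) : ℕ :=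
  sInf { m | HasLabel n P Tc x m }

/-- The multiplicity `⌈t/2⌉` of a point, `t` being the number of rectangles containing it. -/
def multD (n : ℕ) (P : PartialQuiver n) (Tc : ℕ × ℕ → ℤ × ℤ) (x : ℤ × ℤ) : ℕ :=
  (((Finset.Icc 2 n ×ˢ Finset.Icc 2 n).filter (fun lh =>
      IsComp n P lh.1 lh.2 ∧ InRect n Tc lh.1 lh.2 x)).card + 1) / 2

/-- Diagonal rows of `D(P)` run in direction `(1,-1)`; they are the level sets of the key. -/
def keyOf (x : ℤ × ℤ) : ℤ := x.1 + x.2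

def maxKey (n : ℕ) (P : PartialQuiver n) (Tc : ℕ × ℕ → ℤ × ℤ) : ℤ :=
  WithBot.unbotD 0 (((pointsD n P Tc).image keyOf).max)

def minKey (n : ℕ) (P : PartialQuiver n) (Tc : ℕ × ℕ → ℤ × ℤ) : ℤ :=
  WithTop.untopD 0 (((pointsD n P Tc).image keyOf).min)

def maxX (n : ℕ) (P : PartialQuiver n) (Tc : ℕ × ℕ → ℤ × ℤ) : ℤ :=
  WithBot.unbotD 0 (((pointsD n P Tc).image Prod.fst).max)

def minX (n : ℕ) (P : PartialQuiver n) (Tc : ℕ × ℕ → ℤ × ℤ) : ℤ :=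
  WithTop.untopD 0 (((pointsD n P Tc).image Prod.fst).min)

def keyT (Tc : ℕ × ℕ → ℤ × ℤ) (lo hi : ℕ) : ℤ := keyOf (Tc (lo, hi))

def dT (Tc : ℕ × ℕ → ℤ × ℤ) (lo hi : ℕ) : ℤ := (Tc (lo, hi)).1 - (Tc (lo, hi)).2

/-- `c` is the key of a diagonal row of `D(P)`. -/
def IsCellRow (n : ℕ) (P : PartialQuiver n) (Tc : ℕ × ℕ → ℤ × ℤ) (c : ℤ) : Prop :=
  ∃ x ∈ pointsD n P Tc, keyOf x = c

/-- The rectangle of the component `(lo,hi)` meets the diagonal row with key `c`. -/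
def CoversRow (n : ℕ) (P : PartialQuiver n) (Tc : ℕ × ℕ → ℤ × ℤ) (lo hi : ℕ) (c : ℤ) : Prop :=
  IsComp n P lo hi ∧ keyT Tc lo hi - 2 * ((lo : ℤ) - 2) ≤ c ∧ c ≤ keyT Tc lo hi

/-- The lines in direction `(-1,-1)` bounding the rectangles which meet the diagonal
row with key `c` (recorded by their invariant `x - y`, offset by `±1` from the points). -/
def dEdges (n : ℕ) (P : PartialQuiver n) (Tc : ℕ × ℕ → ℤ × ℤ) (c : ℤ) : Finset ℤ :=
  ((Finset.Icc 2 n ×ˢ Finset.Icc 2 n).filter (fun lh => CoversRow n P Tc lh.1 lh.2 c)).biUnion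
    (fun lh => {dT Tc lh.1 lh.2 - 1, dT Tc lh.1 lh.2 + 2 * ((n : ℤ) - (lh.2 : ℤ)) + 1})

/-- The number of boxes in the row of boxes through the diagonal row with key `c`. -/
def boxCount (n : ℕ) (P : PartialQuiver n) (Tc : ℕ × ℕ → ℤ × ℤ) (c : ℤ) : ℕ :=
  (dEdges n P Tc c).card - 1

/-- `z` is (the key of) the central line `Z` of `D(P)`: it separates the diagonal rows
whose rows of boxes have box-numbers of one parity from those of the other parity. -/
def IsCentralLine (n : ℕ) (P : PartialQuiver n) (Tc : ℕ × ℕ → ℤ × ℤ) (z : ℤ) : Prop :=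
  minKey n P Tc < z ∧ z < maxKey n P Tc ∧
  (∀ c : ℤ, IsCellRow n P Tc c → c ≠ z) ∧
  (∀ c c' : ℤ, IsCellRow n P Tc c → IsCellRow n P Tc c' → z < c → z < c' →
    (Even (boxCount n P Tc c) ↔ Even (boxCount n P Tc c'))) ∧
  (∀ c c' : ℤ, IsCellRow n P Tc c → IsCellRow n P Tc c' → c < z → c' < z →
    (Even (boxCount n P Tc c) ↔ Even (boxCount n P Tc c'))) ∧
  (∀ c c' : ℤ, IsCellRow n P Tc c → IsCellRow n P Tc c' → c < z → z < c' →
    ¬ (Even (boxCount n P Tc c) ↔ Even (boxCount n P Tc c')))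

/-- `x` lies in `ρ*(Y)`: the part of the rectangle of `Y = (lo,hi)` on the same side
of the central line as its labelled corner (the rightmost corner for type `L`, the
leftmost corner for type `R`). -/
def InRhoStar (n : ℕ) (P : PartialQuiver n) (Tc : ℕ × ℕ → ℤ × ℤ) (z : ℤ)
    (lo hi : ℕ) (x : ℤ × ℤ) : Prop :=
  InRect n Tc lo hi x ∧
    (P.edge lo = PQSym.L → (z < keyOf x ↔ z < keyT Tc lo hi)) ∧
    (P.edge lo = PQSym.R → (z < keyOf x ↔ z < keyT Tc lo hi - 2 * ((lo : ℤ) - 2)))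

/-- The root `α_{cd}` arises from the component `Y = (lo,hi)` and the diagonal row with
key `k`: the intersection of that row with `ρ*(Y)` consists exactly of points labelled
`c, c+1, …, d-1` in order from top-left to bottom-right. -/
def ArisesFromY (n : ℕ) (P : PartialQuiver n) (Tc : ℕ × ℕ → ℤ × ℤ) (z : ℤ)
    (lo hi c d : ℕ) (k : ℤ) : Prop :=
  c < d ∧ ∃ p : ℤ × ℤ,
    ({ x : ℤ × ℤ | keyOf x = k ∧ InRhoStar n P Tc z lo hi x } =
      { y : ℤ × ℤ | ∃ t : ℕ, t ≤ d - c - 1 ∧ y = (p.1 + (t : ℤ), p.2 - (t : ℤ)) }) ∧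
    ∀ t : ℕ, t ≤ d - c - 1 → HasLabel n P Tc (p.1 + (t : ℤ), p.2 - (t : ℤ)) (c + t)

/-- The root `α_{cd}` arises from the diagonal row with key `k` (via some component). -/
def ArisesFrom (n : ℕ) (P : PartialQuiver n) (Tc : ℕ × ℕ → ℤ × ℤ) (z : ℤ)
    (c d : ℕ) (k : ℤ) : Prop :=
  ∃ lo hi : ℕ, IsComp n P lo hi ∧ ArisesFromY n P Tc z lo hi c d k

/-- The set `S(Y)` of positive roots of a component. -/
def SY (n : ℕ) (P : PartialQuiver n) (Tc : ℕ × ℕ → ℤ × ℤ) (z : ℤ) (lo hi : ℕ) :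
    Set (ℕ × ℕ) :=
  { cd | ∃ k : ℤ, ArisesFromY n P Tc z lo hi cd.1 cd.2 k }

/-- The set `S(P)` of positive roots. -/
def SP (n : ℕ) (P : PartialQuiver n) (Tc : ℕ × ℕ → ℤ × ℤ) (z : ℤ) : Set (ℕ × ℕ) :=
  { cd | ∃ k : ℤ, ArisesFrom n P Tc z cd.1 cd.2 k }

/-- `S₁(x)` for a point `x` of `D(P)` with label `m`: roots of `S(P)` arising from the
rows strictly above the row of `x`, together with those arising from the row of `x`
of the form `α_{cd}` with `c ≥ m`. -/
def S1x (n : ℕ) (P : PartialQuiver n) (Tc : ℕ × ℕ → ℤ × ℤ) (z : ℤ)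
    (x : ℤ × ℤ) (m : ℕ) : Set (ℕ × ℕ) :=
  { cd | (∃ k : ℤ, keyOf x < k ∧ ArisesFrom n P Tc z cd.1 cd.2 k) ∨
      (ArisesFrom n P Tc z cd.1 cd.2 (keyOf x) ∧ m ≤ cd.1) }

/-- `S₂(x)`: the roots `α_{md}` cut off from roots `α_{c'd} ∈ S(P)` arising from the
row of `x` with `c' < m`. -/
def S2x (n : ℕ) (P : PartialQuiver n) (Tc : ℕ × ℕ → ℤ × ℤ) (z : ℤ)
    (x : ℤ × ℤ) (m : ℕ) : Set (ℕ × ℕ) :=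
  { cd | cd.1 = m ∧ m < cd.2 ∧ ∃ c' : ℕ, c' < m ∧ ArisesFrom n P Tc z c' cd.2 (keyOf x) }

/-- `S(x) = S₁(x) ∪ S₂(x)`. -/
def Sx (n : ℕ) (P : PartialQuiver n) (Tc : ℕ × ℕ → ℤ × ℤ) (z : ℤ)
    (x : ℤ × ℤ) (m : ℕ) : Set (ℕ × ℕ) :=
  S1x n P Tc z x m ∪ S2x n P Tc z x m

/-! ### Reading off the diagram: the sequence `μ(P)` -/

/-- The labels (with multiplicity) of the points of the diagonal row of `D(P)` with key
`k` having `x`-coordinate `≥ xlo`, read from top-left to bottom-right. -/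
def rowListP (n : ℕ) (P : PartialQuiver n) (Tc : ℕ × ℕ → ℤ × ℤ) (k : ℤ) (xlo : ℤ) :
    List ℕ :=
  ((List.range ((maxX n P Tc - minX n P Tc).toNat + 1)).map
      (fun t => minX n P Tc + (t : ℤ))).flatMap
    (fun xx => if xlo ≤ xx ∧ (xx, k - xx) ∈ pointsD n P Tc then
        List.replicate (multD n P Tc (xx, k - xx)) (labelD n P Tc (xx, k - xx)) else [])

/-- The sequence `μ(P)`: the diagonal rows read from the last (bottom left) to the
first (top right), each row from top-left to bottom-right, labels repeated according
to multiplicity. -/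
def muP (n : ℕ) (P : PartialQuiver n) (Tc : ℕ × ℕ → ℤ × ℤ) : List ℕ :=
  ((List.range ((maxKey n P Tc - minKey n P Tc).toNat + 1)).map
      (fun t => minKey n P Tc + (t : ℤ))).flatMap
    (fun k => rowListP n P Tc k (minX n P Tc))

/-- The list of operator indices applied (in order of application) to reach the point
`x`: the rows `1, …, a-1` in turn, each read from its bottom-right end to its top-left
end, then the row of `x` from its bottom-right end up to and including `x`. -/
def opsTo (n : ℕ) (P : PartialQuiver n) (Tc : ℕ × ℕ → ℤ × ℤ) (x : ℤ × ℤ) : List ℕ :=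
  (((List.range (((maxKey n P Tc - keyOf x) / 2).toNat)).map
      (fun t => maxKey n P Tc - 2 * (t : ℤ))).flatMap
    (fun k => (rowListP n P Tc k (minX n P Tc)).reverse)) ++
  (rowListP n P Tc (keyOf x) x.1).reverse

/-- The word whose letters are, for `r = 1, …, k` in order, the letter `i_r` of `w`
repeated `(v_P)_r` times. -/
def FwordP (n : ℕ) (w : List ℕ) (P : PartialQuiver n) : List ℕ :=
  (List.range w.length).flatMap (fun r0 => List.replicate (vP n w P (r0 + 1)) (letterAt w (r0 + 1)))

/-- The word whose letters are, for `r = 1, …, k` in order, the letter `i_r` of `w`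
repeated `(v_j)_r` times. -/
def FwordJ (n : ℕ) (w : List ℕ) (j : ℕ) : List ℕ :=
  (List.range w.length).flatMap (fun r0 => List.replicate (vj n w j (r0 + 1)) (letterAt w (r0 + 1)))

/-! ### The diagram `D(j)`, `j ∈ [1,n]` : a single type `L` rectangle with
`a = j`, `b = j + 1`. -/

def InRectJ (n j : ℕ) (T0 : ℤ × ℤ) (x : ℤ × ℤ) : Prop :=
  ∃ u v : ℕ, u < j ∧ v < n + 1 - j ∧ x = rectPt T0 u v

def pointsDJ (n j : ℕ) (T0 : ℤ × ℤ) : Finset (ℤ × ℤ) :=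
  (Finset.range j ×ˢ Finset.range (n + 1 - j)).image (fun uv => rectPt T0 uv.1 uv.2)

def HasLabelJ (n j : ℕ) (T0 : ℤ × ℤ) (x : ℤ × ℤ) (m : ℕ) : Prop :=
  ∃ u v : ℕ, u < j ∧ v < n + 1 - j ∧ x = rectPt T0 u v ∧ m = 1 + u + v

def labelDJ (n j : ℕ) (T0 : ℤ × ℤ) (x : ℤ × ℤ) : ℕ :=
  sInf { m | HasLabelJ n j T0 x m }

def maxKeyJ (n j : ℕ) (T0 : ℤ × ℤ) : ℤ := WithBot.unbotD 0 (((pointsDJ n j T0).image keyOf).max)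
def minKeyJ (n j : ℕ) (T0 : ℤ × ℤ) : ℤ := WithTop.untopD 0 (((pointsDJ n j T0).image keyOf).min)
def maxXJ (n j : ℕ) (T0 : ℤ × ℤ) : ℤ := WithBot.unbotD 0 (((pointsDJ n j T0).image Prod.fst).max)
def minXJ (n j : ℕ) (T0 : ℤ × ℤ) : ℤ := WithTop.untopD 0 (((pointsDJ n j T0).image Prod.fst).min)

/-- `α_{cd}` arises from the diagonal row of `D(j)` with key `k`: that row consists
exactly of points labelled `c, …, d-1` in order. -/
def ArisesJ (n j : ℕ) (T0 : ℤ × ℤ) (c d : ℕ) (k : ℤ) : Prop :=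
  c < d ∧ ∃ p : ℤ × ℤ,
    ({ x : ℤ × ℤ | keyOf x = k ∧ InRectJ n j T0 x } =
      { y : ℤ × ℤ | ∃ t : ℕ, t ≤ d - c - 1 ∧ y = (p.1 + (t : ℤ), p.2 - (t : ℤ)) }) ∧
    ∀ t : ℕ, t ≤ d - c - 1 → HasLabelJ n j T0 (p.1 + (t : ℤ), p.2 - (t : ℤ)) (c + t)

def SJ (n j : ℕ) (T0 : ℤ × ℤ) : Set (ℕ × ℕ) :=
  { cd | ∃ k : ℤ, ArisesJ n j T0 cd.1 cd.2 k }

def S1xJ (n j : ℕ) (T0 : ℤ × ℤ) (x : ℤ × ℤ) (m : ℕ) : Set (ℕ × ℕ) :=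
  { cd | (∃ k : ℤ, keyOf x < k ∧ ArisesJ n j T0 cd.1 cd.2 k) ∨
      (ArisesJ n j T0 cd.1 cd.2 (keyOf x) ∧ m ≤ cd.1) }

def S2xJ (n j : ℕ) (T0 : ℤ × ℤ) (x : ℤ × ℤ) (m : ℕ) : Set (ℕ × ℕ) :=
  { cd | cd.1 = m ∧ m < cd.2 ∧ ∃ c' : ℕ, c' < m ∧ ArisesJ n j T0 c' cd.2 (keyOf x) }

def SxJ (n j : ℕ) (T0 : ℤ × ℤ) (x : ℤ × ℤ) (m : ℕ) : Set (ℕ × ℕ) :=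
  S1xJ n j T0 x m ∪ S2xJ n j T0 x m

/-- The sequence `μ(j)`: rows of `D(j)` from bottom-left to top-right, each row from
top-left to bottom-right (all multiplicities are `1`). -/
def muJ (n j : ℕ) : List ℕ :=
  (List.range j).flatMap (fun t => (List.range (n + 1 - j)).map (fun v => 1 + (j - 1 - t) + v))

def rowListJ (n j : ℕ) (T0 : ℤ × ℤ) (k : ℤ) (xlo : ℤ) : List ℕ :=
  ((List.range ((maxXJ n j T0 - minXJ n j T0).toNat + 1)).map
      (fun t => minXJ n j T0 + (t : ℤ))).flatMap
    (fun xx => if xlo ≤ xx ∧ (xx, k - xx) ∈ pointsDJ n j T0 then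
        [labelDJ n j T0 (xx, k - xx)] else [])

def opsToJ (n j : ℕ) (T0 : ℤ × ℤ) (x : ℤ × ℤ) : List ℕ :=
  (((List.range (((maxKeyJ n j T0 - keyOf x) / 2).toNat)).map
      (fun t => maxKeyJ n j T0 - 2 * (t : ℤ))).flatMap
    (fun k => (rowListJ n j T0 k (minXJ n j T0)).reverse)) ++
  (rowListJ n j T0 (keyOf x) x.1).reverse

/-! ### Reineke's description of the Kashiwara operators -/

/-- `f_{ij} = Σ_{l=j}^{n+1} v_{il} - Σ_{l=j+1}^{n+1} v_{i+1,l}`. -/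
def fRein (n : ℕ) (v : ℕ × ℕ → ℕ) (i j : ℕ) : ℤ :=
  (∑ l ∈ Finset.Icc j (n + 1), (v (i, l) : ℤ)) -
    ∑ l ∈ Finset.Icc (j + 1) (n + 1), (v (i + 1, l) : ℤ)

/-- The minimal `j ∈ (i, n+1]` at which `f_{ij}` is maximal. -/
def j0R (n : ℕ) (v : ℕ × ℕ → ℕ) (i : ℕ) : ℕ :=
  sInf { j : ℕ | i + 1 ≤ j ∧ j ≤ n + 1 ∧
    ∀ j' : ℕ, i + 1 ≤ j' → j' ≤ n + 1 → fRein n v i j' ≤ fRein n v i j }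

/-- The Reineke operator `F̃_i`: increase `v_{i,j₀}` by one and (if `j₀ > i + 1`)
decrease `v_{i+1,j₀}` by one. -/
def FRein (n i : ℕ) (v : ℕ × ℕ → ℕ) : ℕ × ℕ → ℕ := fun cd =>
  if cd = (i, j0R n v i) then v cd + 1
  else if cd = (i + 1, j0R n v i) ∧ i + 1 < j0R n v i then v cd - 1
  else v cd

/-- The `0/1` indicator vector of a set of positive roots. -/
def indVec (S : Set (ℕ × ℕ)) : ℕ × ℕ → ℕ := fun cd => if cd ∈ S then 1 else 0



lemma height_aux (n : ℕ) (P : PartialQuiver n) (Tc : ℕ × ℕ → ℤ × ℤ) (z : ℤ)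
    (lo hi c d : ℕ) (k : ℤ)
    (h : ArisesFromY n P Tc z lo hi c d k) : d - c - 1 = n - hi := by
  obtain ⟨hcd, p, hset, -⟩ := h
  have hmem := fun y => Set.ext_iff.mp hset y
  have hp : keyOf p = k ∧ InRhoStar n P Tc z lo hi p :=
    (hmem p).mpr ⟨0, Nat.zero_le _, by simp⟩
  obtain ⟨hk, ⟨u, v, hu, hv, hpe⟩, hL, hR⟩ := hp
  set T := Tc (lo, hi) with hTdef
  have hp1 : p.1 = T.1 - (u : ℤ) + (v : ℤ) := by rw [hpe]; rfl
  have hp2 : p.2 = T.2 - (u : ℤ) - (v : ℤ) := by rw [hpe]; rfl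
  have hkeyp : keyOf p = T.1 + T.2 - 2 * (u : ℤ) := by
    simp only [keyOf, hp1, hp2]; ring
  have hrow : ∀ v' : ℕ, v' ≤ n - hi →
      ∃ t : ℕ, t ≤ d - c - 1 ∧ rectPt T u v' = (p.1 + (t : ℤ), p.2 - (t : ℤ)) := by
    intro v' hv'
    have hkey : keyOf (rectPt T u v') = k := by
      rw [← hk, hkeyp]; simp only [keyOf, rectPt]; ring
    refine (hmem _).mp ⟨hkey, ⟨⟨u, v', hu, hv', rfl⟩, ?_, ?_⟩⟩
    · intro hedge; rw [hkey, ← hk]; exact hL hedge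
    · intro hedge; rw [hkey, ← hk]; exact hR hedge
  -- v = 0 and p is the top-left point of its row in the rectangle
  obtain ⟨t1, ht1, he1⟩ := hrow 0 (Nat.zero_le _)
  have hfst1 : T.1 - (u : ℤ) + (0 : ℕ) = p.1 + (t1 : ℤ) := congrArg Prod.fst he1
  have hv0 : v = 0 := by rw [hp1] at hfst1; push_cast at hfst1; omega
  -- the bottom-right point of the row lies in the segment
  obtain ⟨t2, ht2, he2⟩ := hrow (n - hi) le_rfl
  have hfst2 : T.1 - (u : ℤ) + ((n - hi : ℕ) : ℤ) = p.1 + (t2 : ℤ) :=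
    congrArg Prod.fst he2
  -- the last point of the segment lies in the rectangle row
  have hlast : keyOf (p.1 + ((d - c - 1 : ℕ) : ℤ), p.2 - ((d - c - 1 : ℕ) : ℤ)) = k ∧
      InRhoStar n P Tc z lo hi (p.1 + ((d - c - 1 : ℕ) : ℤ), p.2 - ((d - c - 1 : ℕ) : ℤ)) :=
    (hmem _).mpr ⟨d - c - 1, le_rfl, rfl⟩
  obtain ⟨-, ⟨u', v', hu', hv'', he3⟩, -, -⟩ := hlast
  have h3a : p.1 + ((d - c - 1 : ℕ) : ℤ) = T.1 - (u' : ℤ) + (v' : ℤ) := congrArg Prod.fst he3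
  have h3b : p.2 - ((d - c - 1 : ℕ) : ℤ) = T.2 - (u' : ℤ) - (v' : ℤ) := congrArg Prod.snd he3
  rw [hp1] at hfst2 h3a
  rw [hp2] at h3b
  omega

/-- (a) every root of `S(Y)` has height `n + 2 - b(Y) = n + 1 - hi`, and
the roots of `S(Y)` have pairwise distinct left endpoints and pairwise distinct right
endpoints; (b) if `Z = (lo', hi')` is the component immediately to the right of
`Y = (lo, hi)` (i.e. `hi' + 1 = lo`), the common height of the roots of `S(Z)` equals
that of the roots of `S(Y)` plus the number `hi - lo + 1` of edges of `Y`. -/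
theorem stmt13 (n : ℕ) (hn : 1 ≤ n) (P : PartialQuiver n)
    (Tc : ℕ × ℕ → ℤ × ℤ) (hT : IsRealization n P Tc)
    (z : ℤ) (hz : IsCentralLine n P Tc z) :
    (∀ lo hi : ℕ, IsComp n P lo hi →
      (∀ cd ∈ SY n P Tc z lo hi, cd.2 - cd.1 = n + 1 - hi) ∧
      (∀ cd ∈ SY n P Tc z lo hi, ∀ cd' ∈ SY n P Tc z lo hi,
        (cd.1 = cd'.1 → cd = cd') ∧ (cd.2 = cd'.2 → cd = cd'))) ∧
    (∀ lo hi lo' hi' : ℕ, IsComp n P lo hi → IsComp n P lo' hi' → hi' + 1 = lo →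
      ∀ cd ∈ SY n P Tc z lo hi, ∀ cd' ∈ SY n P Tc z lo' hi',
        cd'.2 - cd'.1 = (cd.2 - cd.1) + (hi - lo + 1)) := by
  have key : ∀ lo hi : ℕ, IsComp n P lo hi → ∀ cd ∈ SY n P Tc z lo hi,
      cd.1 < cd.2 ∧ cd.2 - cd.1 = n + 1 - hi := by
    intro lo hi hcomp cd hcd
    obtain ⟨k, hk⟩ := hcd
    have hlt : cd.1 < cd.2 := hk.1
    have h := height_aux n P Tc z lo hi cd.1 cd.2 k hk
    obtain ⟨-, -, hhi, -⟩ := hcomp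
    exact ⟨hlt, by omega⟩
  constructor
  · intro lo hi hcomp
    refine ⟨fun cd hcd => (key lo hi hcomp cd hcd).2, ?_⟩
    intro cd hcd cd' hcd'
    obtain ⟨h1, h2⟩ := key lo hi hcomp cd hcd
    obtain ⟨h1', h2'⟩ := key lo hi hcomp cd' hcd'
    constructor
    · intro he
      have : cd.2 = cd'.2 := by omega
      exact Prod.ext he this
    · intro he
      have : cd.1 = cd'.1 := by omega
      exact Prod.ext this he
  · intro lo hi lo' hi' hcomp hcomp' hadj cd hcd cd' hcd'
    obtain ⟨h1, h2⟩ := key lo hi hcomp cd hcd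
    obtain ⟨h1', h2'⟩ := key lo' hi' hcomp' cd' hcd'
    obtain ⟨hlo2, hlohi, hhin, -⟩ := hcomp
    obtain ⟨hlo2', hlohi', hhin', -⟩ := hcomp'
    omega

end Paper
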